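/- arXiv:1701.01560 — 2 statements merged into one kernel-verified Lean document; each statement's English description precedes it below -/
import Mathlib

section
/- If ρ ∈ (−1,0), then G attains its global maximum over ℝ at y*, i.e. G(y) ≤ G(y*) for all y ∈ ℝ; moreover G(y*) ≥ 0. -/
open MeasureTheory Real

/-- The standard normal density `φ(u) = (2π)^{-1/2} exp(-u²/2)`. -/
noncomputable def stdNormalPDF (u : ℝ) : ℝ := (Real.sqrt (2 * π))⁻¹ * Real.exp (-u ^ 2 / 2)

/-- The standard normal CDF `Φ(x) = ∫_{-∞}^x φ(u) du`. -/
noncomputable def stdNormalCDF (x : ℝ) : ℝ := ∫ u in Set.Iic x, stdNormalPDF u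

/-- `G(y) = Φ(x)Φ(y) − ∫_{−∞}^{y} Φ((x − ρu)/√(1−ρ²)) φ(u) du`. -/
noncomputable def Gfun (ρ x y : ℝ) : ℝ :=
  stdNormalCDF x * stdNormalCDF y
    - ∫ u in Set.Iic y, stdNormalCDF ((x - ρ * u) / Real.sqrt (1 - ρ ^ 2)) * stdNormalPDF u

/-- `y* = x(1 − √(1−ρ²))/ρ`. -/
noncomputable def ystar (ρ x : ℝ) : ℝ := x * (1 - Real.sqrt (1 - ρ ^ 2)) / ρ

/-! Writing `Φ(x)Φ(y)` as `∫_{-∞}^y Φ(x) φ(u) du` gives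
`G(y) = ∫_{-∞}^y (Φ(x) − Φ((x − ρu)/√(1−ρ²))) φ(u) du`. For `ρ < 0` the argument
`(x − ρu)/√(1−ρ²)` is increasing in `u` and equals `x` exactly at `u = y*`, so the integrand is
nonnegative left of `y*` and nonpositive right of it: `G` increases up to `y*` and decreases
afterwards, and `G(y*)` is the integral of a nonnegative function. -/

open Set ProbabilityTheory

theorem setIntegral_Iic_le_of_sign_change {μ : Measure ℝ} {f : ℝ → ℝ} {a : ℝ}
    (hf : Integrable f μ) (hpos : ∀ u ≤ a, 0 ≤ f u) (hneg : ∀ u, a ≤ u → f u ≤ 0) (y : ℝ) :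
    ∫ u in Iic y, f u ∂μ ≤ ∫ u in Iic a, f u ∂μ := by
  rw [← sub_nonneg, intervalIntegral.integral_Iic_sub_Iic hf.integrableOn hf.integrableOn]
  rcases le_total y a with hya | hay
  · exact intervalIntegral.integral_nonneg hya fun u hu => hpos u hu.2
  · rw [intervalIntegral.integral_symm, ← intervalIntegral.integral_neg]
    exact intervalIntegral.integral_nonneg hay fun u hu => neg_nonneg.2 (hneg u hu.1)

theorem stdNormalPDF_eq_gaussianPDFReal : stdNormalPDF = gaussianPDFReal 0 1 := by
  ext u
  simp [stdNormalPDF, gaussianPDFReal]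

theorem integrable_stdNormalPDF : Integrable stdNormalPDF := by
  rw [stdNormalPDF_eq_gaussianPDFReal]
  exact integrable_gaussianPDFReal 0 1

theorem stdNormalPDF_nonneg (u : ℝ) : 0 ≤ stdNormalPDF u := by
  rw [stdNormalPDF_eq_gaussianPDFReal]
  exact gaussianPDFReal_nonneg 0 1 u

theorem monotone_stdNormalCDF : Monotone stdNormalCDF := fun _ _ hst =>
  setIntegral_mono_set integrable_stdNormalPDF.integrableOn
    (ae_of_all _ stdNormalPDF_nonneg) (Iic_subset_Iic.2 hst).eventuallyLE

theorem abs_stdNormalCDF_le_one (t : ℝ) : |stdNormalCDF t| ≤ 1 := by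
  rw [stdNormalCDF,
    abs_of_nonneg (setIntegral_nonneg measurableSet_Iic fun u _ => stdNormalPDF_nonneg u),
    ← integral_gaussianPDFReal_eq_one 0 one_ne_zero, ← stdNormalPDF_eq_gaussianPDFReal]
  exact setIntegral_le_integral integrable_stdNormalPDF (ae_of_all _ stdNormalPDF_nonneg)

theorem integrable_stdNormalCDF_comp_mul_stdNormalPDF {g : ℝ → ℝ} (hg : Measurable g) :
    Integrable fun u => stdNormalCDF (g u) * stdNormalPDF u :=
  integrable_stdNormalPDF.bdd_mul (monotone_stdNormalCDF.measurable.comp hg).aestronglyMeasurable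
    (ae_of_all _ fun u => abs_stdNormalCDF_le_one (g u))

theorem integrable_stdNormalCDF_sub_comp_mul_stdNormalPDF (t : ℝ) {g : ℝ → ℝ}
    (hg : Measurable g) :
    Integrable fun u => (stdNormalCDF t - stdNormalCDF (g u)) * stdNormalPDF u := by
  simp only [sub_mul]
  exact (integrable_stdNormalPDF.const_mul _).sub
    (integrable_stdNormalCDF_comp_mul_stdNormalPDF hg)

theorem Gfun_eq_setIntegral (ρ x y : ℝ) :
    Gfun ρ x y = ∫ u in Iic y,
      (stdNormalCDF x - stdNormalCDF ((x - ρ * u) / √(1 - ρ ^ 2))) * stdNormalPDF u := by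
  simp only [sub_mul]
  rw [integral_sub (integrable_stdNormalPDF.const_mul _).integrableOn
      (integrable_stdNormalCDF_comp_mul_stdNormalPDF (by fun_prop)).integrableOn,
    integral_const_mul]
  rfl

theorem sub_mul_ystar_div_sqrt {ρ : ℝ} (x : ℝ) (hρ₀ : ρ ≠ 0) (hρ₁ : ρ ^ 2 < 1) :
    (x - ρ * ystar ρ x) / √(1 - ρ ^ 2) = x := by
  have hc : √(1 - ρ ^ 2) ≠ 0 := (Real.sqrt_pos.2 (by linarith)).ne'
  rw [ystar]
  field_simp
  ring

theorem monotone_sub_mul_div_sqrt {ρ : ℝ} (x : ℝ) (hρ : ρ ≤ 0) :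
    Monotone fun u => (x - ρ * u) / √(1 - ρ ^ 2) := fun u v huv =>
  div_le_div_of_nonneg_right (by nlinarith) (Real.sqrt_nonneg _)

/-- If `ρ ∈ (−1,0)` then `G` attains its global maximum over `ℝ` at
`y*`, i.e. `G(y) ≤ G(y*)` for all `y`; moreover `G(y*) ≥ 0`. -/
theorem stmt5 (ρ x : ℝ) (hρ : ρ ∈ Set.Ioo (-1 : ℝ) 0) :
    (∀ y : ℝ, Gfun ρ x y ≤ Gfun ρ x (ystar ρ x)) ∧ 0 ≤ Gfun ρ x (ystar ρ x) := by
  obtain ⟨hρ₁, hρ₀⟩ := hρ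
  set F := fun u => stdNormalCDF ((x - ρ * u) / √(1 - ρ ^ 2))
  have hF : Monotone F := monotone_stdNormalCDF.comp (monotone_sub_mul_div_sqrt x hρ₀.le)
  have hF_ystar : F (ystar ρ x) = stdNormalCDF x := by
    simp only [F, sub_mul_ystar_div_sqrt x hρ₀.ne (by nlinarith)]
  have hpos : ∀ u ≤ ystar ρ x, 0 ≤ (stdNormalCDF x - F u) * stdNormalPDF u := fun u hu =>
    mul_nonneg (sub_nonneg.2 (hF_ystar ▸ hF hu)) (stdNormalPDF_nonneg u)
  have hneg : ∀ u, ystar ρ x ≤ u → (stdNormalCDF x - F u) * stdNormalPDF u ≤ 0 := fun u hu =>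
    mul_nonpos_of_nonpos_of_nonneg (sub_nonpos.2 (hF_ystar ▸ hF hu)) (stdNormalPDF_nonneg u)
  have hint : Integrable fun u => (stdNormalCDF x - F u) * stdNormalPDF u :=
    integrable_stdNormalCDF_sub_comp_mul_stdNormalPDF x (by fun_prop)
  simp only [Gfun_eq_setIntegral]
  exact ⟨setIntegral_Iic_le_of_sign_change hint hpos hneg,
    setIntegral_nonneg measurableSet_Iic hpos⟩
end

section
/- For each fixed x ∈ ℝ, the function ρ ↦ (1/(Φ(x)(1−Φ(x)))) · |∫_{−∞}^{y*(ρ)} Φ((x − ρu)/√(1−ρ²)) φ(u) du − Φ(x)Φ(y*(ρ))|, where y*(ρ) = x(1 − √(1−ρ²))/ρ, is strictly increasing on (0,1). Equivalently, for a bivariate standard normal pair with correlation ρ, the Kolmogorov dependence statistic k(x) = sup_y |P(Y ≤ y | X > x) − P(Y ≤ y | X ≤ x)| is a strictly increasing function of |ρ| on (0,1). -/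
/-!
With `a = ρ` and `b = √(1 - ρ²)`, the signed deviation inside the absolute value is the standard
Gaussian mass of the wedge `{(u, w) | x < w, a u + b w ≤ x}`: slicing it at fixed `u` gives the
integral over `u ≤ y*(ρ)`, because `y*(ρ)` is exactly where these slices become empty, while slicing
it at fixed `w` gives `∫_{w > x} Φ((x - b w)/a) φ(w) dw`. This mass is positive, so the absolute
value can be dropped, and it is even in `x` because `a U + b W` is standard normal for independent
standard normal `U`, `W`. For `0 ≤ x < w` the argument `(x - b w)/a` increases strictly with `ρ`,
hence so does the mass.
-/

open MeasureTheory Real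

/-- The signed quantity
`(Φ(x)(1−Φ(x)))⁻¹ (∫_{−∞}^{y*(ρ)} Φ((x − ρu)/√(1−ρ²)) φ(u) du − Φ(x)Φ(y*(ρ)))`. -/
noncomputable def kappaSigned (x ρ : ℝ) : ℝ :=
  (stdNormalCDF x * (1 - stdNormalCDF x))⁻¹ *
    ((∫ u in Set.Iic (ystar ρ x),
        stdNormalCDF ((x - ρ * u) / Real.sqrt (1 - ρ ^ 2)) * stdNormalPDF u)
      - stdNormalCDF x * stdNormalCDF (ystar ρ x))

/-- `κ(ρ) = (Φ(x)(1−Φ(x)))⁻¹ |∫_{−∞}^{y*(ρ)} Φ((x − ρu)/√(1−ρ²)) φ(u) du − Φ(x)Φ(y*(ρ))|`. -/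
noncomputable def kappaAbs (x ρ : ℝ) : ℝ :=
  (stdNormalCDF x * (1 - stdNormalCDF x))⁻¹ *
    |(∫ u in Set.Iic (ystar ρ x),
        stdNormalCDF ((x - ρ * u) / Real.sqrt (1 - ρ ^ 2)) * stdNormalPDF u)
      - stdNormalCDF x * stdNormalCDF (ystar ρ x)|

/-- `h(ρ) = (1 − √(1−ρ²))/ρ²`. -/
noncomputable def hfun (ρ : ℝ) : ℝ := (1 - Real.sqrt (1 - ρ ^ 2)) / ρ ^ 2

open Set

local notation "φ" => stdNormalPDF
local notation "Φ" => stdNormalCDF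

theorem setIntegral_pos_of_forall_pos {X : Type*} [MeasurableSpace X] {μ : Measure X}
    {f : X → ℝ} {s : Set X} (hs : MeasurableSet s) (hμs : μ s ≠ 0) (hf : IntegrableOn f s μ)
    (hpos : ∀ u ∈ s, 0 < f u) : 0 < ∫ u in s, f u ∂μ := by
  rw [setIntegral_pos_iff_support_of_nonneg_ae
    (ae_restrict_of_forall_mem hs fun u hu => (hpos u hu).le) hf]
  refine pos_iff_ne_zero.2 fun h => hμs (measure_mono_null (fun u hu => ?_) h)
  exact ⟨(hpos u hu).ne', hu⟩

theorem stdNormalPDF_pos (u : ℝ) : 0 < φ u := by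
  unfold stdNormalPDF
  positivity

theorem stdNormalPDF_neg (u : ℝ) : φ (-u) = φ u := by
  simp [stdNormalPDF]

@[fun_prop]
theorem continuous_stdNormalPDF : Continuous φ := by
  unfold stdNormalPDF
  fun_prop

theorem integrable_stdNormalPDF_s14 : Integrable φ := by
  have h := (integrable_exp_neg_mul_sq (b := 1 / 2) (by norm_num)).const_mul (√(2 * π))⁻¹
  refine h.congr (.of_forall fun u => ?_)
  simp only [stdNormalPDF]
  ring_nf

theorem integral_stdNormalPDF : ∫ u, φ u = 1 := by
  have h : ∫ u, Real.exp (-u ^ 2 / 2) = √(2 * π) := by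
    convert integral_gaussian (1 / 2) using 2 <;> ring_nf
  rw [show φ = fun u => (√(2 * π))⁻¹ * Real.exp (-u ^ 2 / 2) from rfl, integral_const_mul, h,
    inv_mul_cancel₀ (by positivity)]

theorem integral_stdNormalPDF_sub_div {a : ℝ} (ha : 0 < a) (c : ℝ) :
    ∫ w, φ ((w - c) / a) = a := by
  rw [integral_sub_right_eq_self (fun w => φ (w / a)) c, Measure.integral_comp_div,
    integral_stdNormalPDF, abs_of_pos ha, smul_eq_mul, mul_one]

theorem stdNormalPDF_mul_stdNormalPDF_swap {a b : ℝ} (ha : a ≠ 0) (hab : a ^ 2 + b ^ 2 = 1)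
    (z w : ℝ) : φ ((z - b * w) / a) * φ w = φ z * φ ((w - b * z) / a) := by
  have h : ((z - b * w) / a) ^ 2 + w ^ 2 = z ^ 2 + ((w - b * z) / a) ^ 2 := by
    field_simp
    linear_combination (w ^ 2 - z ^ 2) * hab
  simp only [stdNormalPDF, mul_mul_mul_comm _ (Real.exp _), ← Real.exp_add]
  congr 2
  linear_combination -h / 2

theorem stdNormalCDF_pos (x : ℝ) : 0 < Φ x :=
  setIntegral_pos_of_forall_pos measurableSet_Iic (by simp) integrable_stdNormalPDF_s14.integrableOn
    fun u _ => stdNormalPDF_pos u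

theorem stdNormalCDF_add_integral_Ioi (x : ℝ) : Φ x + ∫ u in Ioi x, φ u = 1 := by
  rw [stdNormalCDF, intervalIntegral.integral_Iic_add_Ioi integrable_stdNormalPDF_s14.integrableOn
    integrable_stdNormalPDF_s14.integrableOn, integral_stdNormalPDF]

theorem stdNormalCDF_lt_one (x : ℝ) : Φ x < 1 := by
  have h : 0 < ∫ u in Ioi x, φ u :=
    setIntegral_pos_of_forall_pos measurableSet_Ioi (by simp)
      integrable_stdNormalPDF_s14.integrableOn fun u _ => stdNormalPDF_pos u
  linarith [stdNormalCDF_add_integral_Ioi x]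

theorem stdNormalCDF_neg (x : ℝ) : Φ (-x) = 1 - Φ x := by
  have h : Φ (-x) = ∫ u in Ioi x, φ u := by
    simp only [stdNormalCDF, ← integral_comp_neg_Ioi, stdNormalPDF_neg]
  linarith [stdNormalCDF_add_integral_Ioi x]

theorem stdNormalCDF_sub_stdNormalCDF {x y : ℝ} (hxy : x ≤ y) :
    Φ y - Φ x = ∫ u in Ioc x y, φ u := by
  rw [stdNormalCDF, stdNormalCDF, intervalIntegral.integral_Iic_sub_Iic
    integrable_stdNormalPDF_s14.integrableOn integrable_stdNormalPDF_s14.integrableOn,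
    intervalIntegral.integral_of_le hxy]

theorem stdNormalCDF_strictMono : StrictMono Φ := fun x y hxy => by
  rw [← sub_pos, stdNormalCDF_sub_stdNormalCDF hxy.le]
  exact setIntegral_pos_of_forall_pos measurableSet_Ioc (by simp [hxy])
    integrable_stdNormalPDF_s14.integrableOn fun u _ => stdNormalPDF_pos u

theorem measurable_stdNormalCDF : Measurable Φ :=
  stdNormalCDF_strictMono.monotone.measurable

theorem integrable_stdNormalCDF_comp_mul {g : ℝ → ℝ} (hg : Measurable g) :
    Integrable fun u => Φ (g u) * φ u := by
  refine integrable_stdNormalPDF_s14.bdd_mul (c := 1)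
    (measurable_stdNormalCDF.comp hg).aestronglyMeasurable (.of_forall fun u => ?_)
  rw [Real.norm_of_nonneg (stdNormalCDF_pos _).le]
  exact (stdNormalCDF_lt_one _).le

theorem stdNormalCDF_sub_div {a : ℝ} (ha : 0 < a) (x c : ℝ) :
    Φ ((x - c) / a) = a⁻¹ * ∫ z in Iic x, φ ((z - c) / a) := by
  have h : ∫ z in Iic x, φ ((z - c) / a) =
      ∫ z, (Iic ((x - c) / a)).indicator φ ((z - c) / a) := by
    rw [← integral_indicator measurableSet_Iic]
    congr 1
    ext z
    simp [indicator_apply, div_le_div_iff_of_pos_right ha]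
  rw [h, integral_sub_right_eq_self (fun z => (Iic ((x - c) / a)).indicator φ (z / a)) c,
    Measure.integral_comp_div, integral_indicator measurableSet_Iic, abs_of_pos ha, smul_eq_mul,
    inv_mul_cancel_left₀ ha.ne']
  rfl

/-- `a U + b W` is standard normal for independent standard normal `U`, `W`. -/
theorem integral_stdNormalCDF_sub_mul_div_mul_stdNormalPDF {a b : ℝ} (ha : 0 < a)
    (hab : a ^ 2 + b ^ 2 = 1) (x : ℝ) : ∫ w, Φ ((x - b * w) / a) * φ w = Φ x := by
  set f : ℝ → ℝ → ℝ := fun z w => φ z * φ ((w - b * z) / a)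
  have hslice (z : ℝ) : ∫ w, f z w = φ z * a := by
    rw [integral_const_mul, integral_stdNormalPDF_sub_div ha]
  have hf : Integrable (Function.uncurry f) ((volume.restrict (Iic x)).prod volume) := by
    refine (integrable_prod_iff (by unfold f; fun_prop)).2 ⟨.of_forall fun z => ?_, ?_⟩
    · exact ((integrable_stdNormalPDF_s14.comp_div ha.ne').comp_sub_right (b * z)).const_mul (φ z)
    · have hnorm (z w : ℝ) : ‖f z w‖ = f z w :=
        Real.norm_of_nonneg (mul_pos (stdNormalPDF_pos _) (stdNormalPDF_pos _)).le
      simp only [Function.uncurry_apply_pair, hnorm, hslice]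
      exact (integrable_stdNormalPDF_s14.mul_const a).integrableOn
  calc ∫ w, Φ ((x - b * w) / a) * φ w
      = ∫ w, a⁻¹ * ∫ z in Iic x, f z w := by
        congr 1
        ext w
        rw [stdNormalCDF_sub_div ha, mul_assoc, ← integral_mul_const]
        congr 2
        ext z
        exact stdNormalPDF_mul_stdNormalPDF_swap ha.ne' hab z w
    _ = a⁻¹ * ∫ z in Iic x, ∫ w, f z w := by
        rw [integral_const_mul, integral_integral_swap hf]
    _ = Φ x := by
        simp only [hslice, integral_mul_const]
        field_simp
        rfl

theorem integral_setIntegral_stdNormalPDF_comm {s : Set (ℝ × ℝ)} (hs : MeasurableSet s) :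
    ∫ u, (∫ w in {w | (u, w) ∈ s}, φ w) * φ u = ∫ w, (∫ u in {u | (u, w) ∈ s}, φ u) * φ w := by
  set F : ℝ → ℝ → ℝ := fun u w => s.indicator (fun p => φ p.1 * φ p.2) (u, w)
  have hF : Integrable (Function.uncurry F) (volume.prod volume) :=
    (integrable_stdNormalPDF_s14.mul_prod integrable_stdNormalPDF_s14).indicator hs
  have hu (u : ℝ) : (∫ w in {w | (u, w) ∈ s}, φ w) * φ u = ∫ w, F u w := by
    rw [← integral_mul_const, ← integral_indicator
      (show MeasurableSet {w | (u, w) ∈ s} from hs.preimage measurable_prodMk_left)]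
    congr 1
    ext w
    by_cases h : (u, w) ∈ s <;> simp [F, h, mul_comm]
  have hw (w : ℝ) : (∫ u in {u | (u, w) ∈ s}, φ u) * φ w = ∫ u, F u w := by
    rw [← integral_mul_const, ← integral_indicator
      (show MeasurableSet {u | (u, w) ∈ s} from hs.preimage measurable_prodMk_right)]
    rfl
  simp only [hu, hw]
  exact integral_integral_swap hF

/-- The standard Gaussian mass of the wedge `{(u, w) | x < w ∧ a * u + b * w ≤ x}`. -/
noncomputable def wedgeMass (a b x : ℝ) : ℝ :=
  ∫ w in Ioi x, Φ ((x - b * w) / a) * φ w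

theorem integral_sub_stdNormalCDF_mul_eq_wedgeMass {a b : ℝ} (ha : 0 < a) (hb : 0 < b) (x : ℝ) :
    (∫ u in Iic (x * (1 - b) / a), Φ ((x - a * u) / b) * φ u) - Φ x * Φ (x * (1 - b) / a) =
      wedgeMass a b x := by
  set y := x * (1 - b) / a
  set R : Set (ℝ × ℝ) := {p | x < p.2 ∧ a * p.1 + b * p.2 ≤ x}
  have hR : MeasurableSet R :=
    (measurableSet_lt measurable_const measurable_snd).inter
      (measurableSet_le (by fun_prop : Measurable fun p : ℝ × ℝ => a * p.1 + b * p.2)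
        measurable_const)
  have hu (u : ℝ) : (∫ w in {w | (u, w) ∈ R}, φ w) * φ u =
      (Iic y).indicator (fun u => (Φ ((x - a * u) / b) - Φ x) * φ u) u := by
    have hslice : {w | (u, w) ∈ R} = Ioc x ((x - a * u) / b) := by
      ext w
      simp only [R, mem_ofPred_eq, mem_Ioc, le_div_iff₀ hb]
      constructor <;> rintro ⟨h₁, h₂⟩ <;> exact ⟨h₁, by linarith⟩
    by_cases huy : u ≤ y
    · have hx : x ≤ (x - a * u) / b := by
        rw [le_div_iff₀ hb]
        linarith [(le_div_iff₀ ha).1 huy]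
      rw [hslice, ← stdNormalCDF_sub_stdNormalCDF hx, indicator_of_mem (mem_Iic.2 huy)]
    · have hx : (x - a * u) / b < x := by
        rw [div_lt_iff₀ hb]
        linarith [(div_lt_iff₀ ha).1 (not_le.1 huy)]
      rw [hslice, Ioc_eq_empty (not_lt.2 hx.le), setIntegral_empty, zero_mul,
        indicator_of_notMem (mt mem_Iic.1 huy)]
  have hw (w : ℝ) : (∫ u in {u | (u, w) ∈ R}, φ u) * φ w =
      (Ioi x).indicator (fun w => Φ ((x - b * w) / a) * φ w) w := by
    by_cases hxw : x < w
    · have hslice : {u | (u, w) ∈ R} = Iic ((x - b * w) / a) := by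
        ext u
        simp only [R, mem_ofPred_eq, mem_Iic, le_div_iff₀ ha, hxw, true_and]
        constructor <;> intro h <;> linarith
      rw [hslice, indicator_of_mem (mem_Ioi.2 hxw)]
      rfl
    · have hslice : {u | (u, w) ∈ R} = ∅ := by
        ext u
        simp [R, hxw]
      rw [hslice, setIntegral_empty, zero_mul, indicator_of_notMem (mt mem_Ioi.1 hxw)]
  calc (∫ u in Iic y, Φ ((x - a * u) / b) * φ u) - Φ x * Φ y
      = ∫ u in Iic y, (Φ ((x - a * u) / b) - Φ x) * φ u := by
        simp only [sub_mul]
        rw [integral_sub (integrable_stdNormalCDF_comp_mul (by fun_prop)).integrableOn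
          (integrable_stdNormalPDF_s14.const_mul (Φ x)).integrableOn, integral_const_mul]
        rfl
    _ = ∫ u, (∫ w in {w | (u, w) ∈ R}, φ w) * φ u := by
        simp only [hu]
        rw [integral_indicator measurableSet_Iic]
    _ = wedgeMass a b x := by
        rw [integral_setIntegral_stdNormalPDF_comm hR]
        simp only [hw]
        rw [integral_indicator measurableSet_Ioi]
        rfl

theorem wedgeMass_pos (a b x : ℝ) : 0 < wedgeMass a b x :=
  setIntegral_pos_of_forall_pos measurableSet_Ioi (by simp)
    (integrable_stdNormalCDF_comp_mul (by fun_prop)).integrableOn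
    fun w _ => mul_pos (stdNormalCDF_pos _) (stdNormalPDF_pos w)

theorem wedgeMass_neg {a b : ℝ} (ha : 0 < a) (hab : a ^ 2 + b ^ 2 = 1) (x : ℝ) :
    wedgeMass a b (-x) = wedgeMass a b x := by
  have hI : Integrable fun w => Φ ((x - b * w) / a) * φ w :=
    integrable_stdNormalCDF_comp_mul (by fun_prop)
  have hsplit := intervalIntegral.integral_Iic_add_Ioi (b := x) hI.integrableOn hI.integrableOn
  rw [integral_stdNormalCDF_sub_mul_div_mul_stdNormalPDF ha hab] at hsplit
  have hreflect : wedgeMass a b (-x) = ∫ w in Iic x, (1 - Φ ((x - b * w) / a)) * φ w := by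
    rw [wedgeMass, ← integral_comp_neg_Iic]
    congr 1
    ext w
    rw [stdNormalPDF_neg, show (-x - b * -w) / a = -((x - b * w) / a) by ring, stdNormalCDF_neg]
  rw [hreflect, wedgeMass]
  simp only [sub_mul, one_mul]
  rw [integral_sub integrable_stdNormalPDF_s14.integrableOn hI.integrableOn]
  change Φ x - _ = _
  linarith

theorem wedgeMass_abs {a b : ℝ} (ha : 0 < a) (hab : a ^ 2 + b ^ 2 = 1) (x : ℝ) :
    wedgeMass a b |x| = wedgeMass a b x := by
  rcases abs_cases x with ⟨hx, _⟩ | ⟨hx, _⟩ <;> simp only [hx, wedgeMass_neg ha hab]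

theorem sub_mul_div_lt_sub_mul_div {a₁ a₂ b₁ b₂ x w : ℝ} (ha₁ : 0 < a₁) (ha₁₂ : a₁ < a₂)
    (hb₁ : 0 < b₁) (hb₂ : 0 < b₂) (h₁ : a₁ ^ 2 + b₁ ^ 2 = 1) (h₂ : a₂ ^ 2 + b₂ ^ 2 = 1)
    (hx : 0 ≤ x) (hxw : x < w) : (x - b₁ * w) / a₁ < (x - b₂ * w) / a₂ := by
  have ha₂ : 0 < a₂ := ha₁.trans ha₁₂
  have hb₁₁ : b₁ ≤ 1 := by nlinarith
  have hb₂₁ : b₂ ≤ 1 := by nlinarith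
  have hc : a₂ - a₁ ≤ a₂ * b₁ - a₁ * b₂ := by
    have e : (a₂ * b₁ - a₁ * b₂) * (a₂ * b₁ + a₁ * b₂) = (a₂ - a₁) * (a₂ + a₁) := by
      linear_combination a₂ ^ 2 * h₁ - a₁ ^ 2 * h₂
    refine le_of_mul_le_mul_right ?_ (by positivity : 0 < a₂ * b₁ + a₁ * b₂)
    rw [e]
    exact mul_le_mul_of_nonneg_left (by nlinarith) (sub_nonneg.2 ha₁₂.le)
  rw [div_lt_div_iff₀ ha₁ ha₂]
  nlinarith [mul_le_mul_of_nonneg_left hc hx, mul_pos (sub_pos.2 ha₁₂) (sub_pos.2 hxw)]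

theorem wedgeMass_lt_wedgeMass {a₁ a₂ b₁ b₂ x : ℝ} (ha₁ : 0 < a₁) (ha₁₂ : a₁ < a₂)
    (hb₁ : 0 < b₁) (hb₂ : 0 < b₂) (h₁ : a₁ ^ 2 + b₁ ^ 2 = 1) (h₂ : a₂ ^ 2 + b₂ ^ 2 = 1)
    (hx : 0 ≤ x) : wedgeMass a₁ b₁ x < wedgeMass a₂ b₂ x := by
  have hI₁ : Integrable fun w => Φ ((x - b₁ * w) / a₁) * φ w :=
    integrable_stdNormalCDF_comp_mul (by fun_prop)
  have hI₂ : Integrable fun w => Φ ((x - b₂ * w) / a₂) * φ w :=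
    integrable_stdNormalCDF_comp_mul (by fun_prop)
  rw [← sub_pos, wedgeMass, wedgeMass, ← integral_sub hI₂.integrableOn hI₁.integrableOn]
  refine setIntegral_pos_of_forall_pos measurableSet_Ioi (by simp) (hI₂.sub hI₁).integrableOn
    fun w hw => sub_pos.2 (mul_lt_mul_of_pos_right ?_ (stdNormalPDF_pos w))
  exact stdNormalCDF_strictMono (sub_mul_div_lt_sub_mul_div ha₁ ha₁₂ hb₁ hb₂ h₁ h₂ hx hw)

theorem sq_add_sqrt_one_sub_sq_sq {ρ : ℝ} (hρ : ρ ∈ Ioo (0 : ℝ) 1) :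
    ρ ^ 2 + √(1 - ρ ^ 2) ^ 2 = 1 := by
  rw [sq_sqrt (by nlinarith [hρ.1, hρ.2])]
  ring

theorem sqrt_one_sub_sq_pos {ρ : ℝ} (hρ : ρ ∈ Ioo (0 : ℝ) 1) : 0 < √(1 - ρ ^ 2) :=
  sqrt_pos.2 (by nlinarith [hρ.1, hρ.2])

theorem wedgeMass_strictMonoOn {x : ℝ} (hx : 0 ≤ x) :
    StrictMonoOn (fun ρ => wedgeMass ρ √(1 - ρ ^ 2) x) (Ioo 0 1) := fun _ h₁ _ h₂ h =>
  wedgeMass_lt_wedgeMass h₁.1 h (sqrt_one_sub_sq_pos h₁) (sqrt_one_sub_sq_pos h₂)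
    (sq_add_sqrt_one_sub_sq_sq h₁) (sq_add_sqrt_one_sub_sq_sq h₂) hx

theorem kappaAbs_eq {ρ : ℝ} (hρ : ρ ∈ Ioo (0 : ℝ) 1) (x : ℝ) :
    kappaAbs x ρ = (Φ x * (1 - Φ x))⁻¹ * wedgeMass ρ √(1 - ρ ^ 2) |x| := by
  rw [kappaAbs, ystar, integral_sub_stdNormalCDF_mul_eq_wedgeMass hρ.1 (sqrt_one_sub_sq_pos hρ),
    abs_of_pos (wedgeMass_pos _ _ _), wedgeMass_abs hρ.1 (sq_add_sqrt_one_sub_sq_sq hρ)]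

/-- For each fixed `x ∈ ℝ`, the function
`ρ ↦ (Φ(x)(1−Φ(x)))⁻¹ |∫_{−∞}^{y*(ρ)} Φ((x − ρu)/√(1−ρ²)) φ(u) du − Φ(x)Φ(y*(ρ))|`
is strictly increasing on `(0,1)`; equivalently, the Kolmogorov dependence statistic of a
bivariate standard normal pair with correlation `ρ` is strictly increasing in `|ρ|` on
`(0,1)`. -/
theorem stmt14 (x : ℝ) : StrictMonoOn (kappaAbs x) (Set.Ioo (0 : ℝ) 1) := by
  intro ρ₁ h₁ ρ₂ h₂ h
  rw [kappaAbs_eq h₁, kappaAbs_eq h₂]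
  have hc : 0 < (Φ x * (1 - Φ x))⁻¹ :=
    inv_pos.2 (mul_pos (stdNormalCDF_pos x) (sub_pos.2 (stdNormalCDF_lt_one x)))
  exact mul_lt_mul_of_pos_left (wedgeMass_strictMonoOn (abs_nonneg x) h₁ h₂ h) hc
end
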